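/- Let φ be a conjunction of k atomic propositions over variables x ∈ (ℝ≥0)^n, where each atomic proposition has the form a₁x₁ + ⋯ + aₙxₙ ∼ c with rational coefficients and ∼ ∈ {≤, <, =, >, ≥}. Then there exist a continuous Petri net N_φ whose set of places is the disjoint union of {1,…,n} and a set of 5k auxiliary places, and a vector y ∈ {0,1}^{5k}, such that for every x ∈ (ℝ≥0)^n: φ(x) holds if and only if the marking (x, y) can reach the zero marking (0, 0) in N_φ, i.e., (x,y) →* (0,0). -/

import Mathlib

/-- A continuous Petri net `N = (P, T, F)` with places `P`, transitions `T`,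
and flow matrices `F₋, F₊ : P × T → ℕ`. -/
structure PetriNet (P T : Type*) where
  Fminus : P → T → ℕ
  Fplus : P → T → ℕ

namespace PetriNet

variable {P T : Type*}

/-- `pre(t)`: the column of `F₋` associated to transition `t`, as a real vector. -/
def pre (N : PetriNet P T) (t : T) : P → ℝ := fun p => (N.Fminus p t : ℝ)

/-- `post(t)`: the column of `F₊` associated to transition `t`, as a real vector. -/
def post (N : PetriNet P T) (t : T) : P → ℝ := fun p => (N.Fplus p t : ℝ)

/-- The transpose net `N^T := (P, T, (F₊, F₋))`. -/
def transpose (N : PetriNet P T) : PetriNet P T := ⟨N.Fplus, N.Fminus⟩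

/-- `m →(αt) m'` : transition `t` is `α`-fired (α > 0) from `m`, leading to `m'`. -/
def fire (N : PetriNet P T) (t : T) (α : ℝ) (m m' : P → ℝ) : Prop :=
  0 < α ∧ (∀ p, α * N.pre t p ≤ m p) ∧
    ∀ p, m' p = m p + α * (N.post t p - N.pre t p)

/-- Firing a sequence `σ = α₁t₁ ⋯ αₙtₙ` (a list of (amount, transition) pairs)
from `m` to `m'`. -/
def fireSeq (N : PetriNet P T) : List (ℝ × T) → (P → ℝ) → (P → ℝ) → Prop
  | [], m, m' => m = m'
  | (α, t) :: σ, m, m' => ∃ m₁, N.fire t α m m₁ ∧ N.fireSeq σ m₁ m'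

/-- The support of a firing sequence: the set of transitions occurring in it. -/
def seqSupport (σ : List (ℝ × T)) : Set T := {t | ∃ α : ℝ, (α, t) ∈ σ}

end PetriNet

namespace PetriNet

variable {P T : Type*}

/-- `m → m'` : some transition can be `α`-fired from `m`, leading to `m'`. -/
def step (N : PetriNet P T) (m m' : P → ℝ) : Prop :=
  ∃ (t : T) (α : ℝ), N.fire t α m m'

end PetriNet

open PetriNet

/-- Comparison operators `∼ ∈ {≤, <, =, >, ≥}`. -/
inductive CmpOp : Type
  | le | lt | eq | gt | ge

/-- Interpretation of a comparison operator. -/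
def CmpOp.holds : CmpOp → ℝ → ℝ → Prop
  | .le, x, y => x ≤ y
  | .lt, x, y => x < y
  | .eq, x, y => x = y
  | .gt, x, y => y < x
  | .ge, x, y => y ≤ x

namespace Enc

variable {P T : Type*}

/-- effect of t on place p -/
def eff (N : PetriNet P T) (t : T) (p : P) : ℝ := N.post t p - N.pre t p

lemma mkstep (N : PetriNet P T) {m : P → ℝ} (t : T) {α : ℝ} (hα : 0 < α)
    (hpre : ∀ p, α * N.pre t p ≤ m p) :
    N.step m (fun p => m p + α * eff N t p) := by
  exact ⟨t, α, hα, hpre, fun p => rfl⟩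

lemma step_nonneg (N : PetriNet P T) {m m' : P → ℝ} (h : N.step m m')
    (hm : ∀ p, 0 ≤ m p) : ∀ p, 0 ≤ m' p := by
  obtain ⟨t, α, hα, hpre, heq⟩ := h
  intro p
  rw [heq p]
  have h1 := hpre p
  have h2 : (0:ℝ) ≤ N.post t p := Nat.cast_nonneg _
  nlinarith [hm p]

lemma rtg_nonneg (N : PetriNet P T) {m m' : P → ℝ}
    (h : Relation.ReflTransGen N.step m m') (hm : ∀ p, 0 ≤ m p) : ∀ p, 0 ≤ m' p := by
  induction h with
  | refl => exact hm
  | tail _ hs ih => exact step_nonneg N hs ih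

variable [Fintype P]

/-- linear functional -/
def lf (w : P → ℝ) (m : P → ℝ) : ℝ := ∑ p, w p * m p

lemma lf_fire (N : PetriNet P T) (w : P → ℝ) {t α m m'} (h : N.fire t α m m') :
    lf w m' = lf w m + α * ∑ p, w p * eff N t p := by
  obtain ⟨hα, hpre, heq⟩ := h
  simp only [lf, eff]
  rw [Finset.mul_sum, ← Finset.sum_add_distrib]
  refine Finset.sum_congr rfl fun p _ => ?_
  rw [heq p]; ring

lemma lf_mono (N : PetriNet P T) (w : P → ℝ)
    (hw : ∀ t, 0 ≤ ∑ p, w p * eff N t p) {m m'}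
    (h : Relation.ReflTransGen N.step m m') : lf w m ≤ lf w m' := by
  induction h with
  | refl => exact le_refl _
  | tail _ hs ih =>
    obtain ⟨t, α, hf⟩ := hs
    have := lf_fire N w hf
    nlinarith [hw t, hf.1]

/-- sandwich invariant: if `lf w` cannot decrease, start and end values agree,
then any invariant preserved by "lf-constant" steps propagates. -/
lemma sandwich (N : PetriNet P T) (w : P → ℝ)
    (hw : ∀ t, 0 ≤ ∑ p, w p * eff N t p)
    (Q : (P → ℝ) → Prop)
    (hstep : ∀ m m', N.step m m' → lf w m = lf w m' → Q m → Q m')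
    {m0 mf} (hrun : Relation.ReflTransGen N.step m0 mf)
    (hend : lf w mf ≤ lf w m0) (hQ : Q m0) : Q mf := by
  induction hrun with
  | refl => exact hQ
  | @tail b cc hb hbc ih =>
    have h1 : lf w m0 ≤ lf w b := lf_mono N w hw hb
    have h2 : lf w b ≤ lf w cc := lf_mono N w hw (Relation.ReflTransGen.single hbc)
    exact hstep b cc hbc (le_antisymm h2 (le_trans hend h1)) (ih (h2.trans hend))


inductive Mode | meq | mns | mst
deriving DecidableEq

def mOf : CmpOp → Mode
  | .eq => .meq | .le => .mns | .ge => .mns | .lt => .mst | .gt => .mst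

def sg : CmpOp → ℤ
  | .ge => -1 | .gt => -1 | _ => 1

section Build

variable (n k : ℕ) (a : Fin k → Fin n → ℚ) (c : Fin k → ℚ) (op : Fin k → CmpOp)

def den (i : Fin k) : ℕ := (c i).den * ∏ j, (a i j).den

lemma den_pos (i : Fin k) : 0 < den n k a c i := by
  apply Nat.mul_pos (c i).pos
  exact Finset.prod_pos fun j _ => (a i j).pos

variable {n k}

lemma qden_dvd_den (i : Fin k) (j : Fin n) : ((a i j).den : ℤ) ∣ (den n k a c i : ℤ) := by
  have : (a i j).den ∣ den n k a c i :=
    Dvd.dvd.mul_left (Finset.dvd_prod_of_mem _ (Finset.mem_univ j)) _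
  exact_mod_cast this

lemma cden_dvd_den (i : Fin k) : ((c i).den : ℤ) ∣ (den n k a c i : ℤ) := by
  exact_mod_cast Dvd.intro _ rfl

/-- integer such that (z : ℚ) = q * d, provided q.den ∣ d -/
def intScale (q : ℚ) (d : ℤ) : ℤ := q.num * (d / (q.den : ℤ))

lemma intScale_cast (q : ℚ) (d : ℤ) (h : (q.den : ℤ) ∣ d) :
    ((intScale q d : ℤ) : ℚ) = q * (d : ℚ) := by
  have h1 : ((q.den : ℤ)) * (d / (q.den : ℤ)) = d := Int.mul_ediv_cancel' h
  have h2 : q * (q.den : ℚ) = (q.num : ℚ) := by exact_mod_cast Rat.mul_den_eq_num q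
  calc ((intScale q d : ℤ) : ℚ) = (q.num : ℚ) * ((d / (q.den : ℤ) : ℤ) : ℚ) := by
        simp [intScale]
    _ = q * (((q.den : ℤ) : ℚ) * ((d / (q.den : ℤ) : ℤ) : ℚ)) := by rw [← h2]; push_cast; ring
    _ = q * (d : ℚ) := by rw [← Int.cast_mul, h1]

def bco (i : Fin k) (j : Fin n) : ℤ := sg (op i) * intScale (a i j) (den n k a c i)

def eco (i : Fin k) : ℤ := sg (op i) * intScale (c i) (den n k a c i)

def md (i : Fin k) : Mode := mOf (op i)

lemma bco_cast (i : Fin k) (j : Fin n) :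
    ((bco a c op i j : ℤ) : ℝ) = (sg (op i) : ℝ) * (a i j : ℝ) * (den n k a c i : ℝ) := by
  have := intScale_cast (a i j) (den n k a c i) (qden_dvd_den a c i j)
  have h2 : ((bco a c op i j : ℤ) : ℚ) = (sg (op i) : ℚ) * (a i j) * (den n k a c i : ℚ) := by
    simp [bco, this]; push_cast; ring
  exact_mod_cast congrArg (fun q : ℚ => (q : ℝ)) h2

lemma eco_cast (i : Fin k) :
    ((eco a c op i : ℤ) : ℝ) = (sg (op i) : ℝ) * (c i : ℝ) * (den n k a c i : ℝ) := by
  have := intScale_cast (c i) (den n k a c i) (cden_dvd_den a c i)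
  have h2 : ((eco a c op i : ℤ) : ℚ) = (sg (op i) : ℚ) * (c i) * (den n k a c i : ℚ) := by
    simp [eco, this]; push_cast; ring
  exact_mod_cast congrArg (fun q : ℚ => (q : ℝ)) h2

/-- what each mode requires of `u = ∑ b x` versus `v = e` -/
def Mode.req : Mode → ℝ → ℝ → Prop
  | .meq, u, v => u = v
  | .mns, u, v => u ≤ v
  | .mst, u, v => u < v

lemma req_iff (o : CmpOp) (D S C : ℝ) (hD : 0 < D) :
    o.holds S C ↔ (mOf o).req ((sg o : ℤ) * D * S) (((sg o : ℤ) : ℝ) * C * D) := by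
  cases o <;>
    simp only [CmpOp.holds, mOf, sg, Mode.req, Int.cast_one, Int.cast_neg, one_mul, neg_mul] <;>
    constructor <;> intro h <;> nlinarith

/-- Translation of the constraint -/
lemma holds_iff_req (i : Fin k) (x : Fin n → ℝ) :
    (op i).holds (∑ j, (a i j : ℝ) * x j) (c i : ℝ) ↔
      (md op i).req (∑ j, ((bco a c op i j : ℤ) : ℝ) * x j) ((eco a c op i : ℤ) : ℝ) := by
  have hd : (0:ℝ) < (den n k a c i : ℝ) := by exact_mod_cast den_pos n k a c i
  have hsum : (∑ j, ((bco a c op i j : ℤ) : ℝ) * x j)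
      = ((sg (op i) : ℤ) : ℝ) * (den n k a c i : ℝ) * (∑ j, (a i j : ℝ) * x j) := by
    rw [Finset.mul_sum]
    refine Finset.sum_congr rfl fun j _ => ?_
    rw [bco_cast]; ring
  rw [hsum, eco_cast, md]
  exact req_iff (op i) _ _ _ hd

/-! ### The net -/

def pl {k : ℕ} : Fin k × Fin 5 ≃ Fin (5 * k) :=
  finProdFinEquiv.trans (finCongr (Nat.mul_comm k 5))

def pls {n k : ℕ} (i : Fin k) (l : Fin 5) : Fin n ⊕ Fin (5 * k) := Sum.inr (pl (i, l))

/-- pre table: mode, place label, transition kind -/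
def preT (m : Mode) (l l' : Fin 5) : ℕ :=
  if l' = 0 then (if l = 2 then 1 else 0)
  else if l' = 1 then (if l = 0 ∨ l = 1 then 1 else 0)
  else if l' = 2 then (if m ≠ Mode.meq ∧ l = 1 then 1 else 0)
  else if l' = 3 then (if m ≠ Mode.meq ∧ l = 3 then 1 else 0)
  else (if m = Mode.mst ∧ (l = 3 ∨ l = 4) then 1 else 0)

def postT (m : Mode) (e : ℤ) (l l' : Fin 5) : ℕ :=
  if l' = 0 then (if l = 0 then (-e).toNat else if l = 1 then e.toNat else 0)
  else if l' = 2 then (if m ≠ Mode.meq ∧ l = 3 then 1 else 0)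
  else if l' = 4 then (if m = Mode.mst ∧ l = 3 then 1 else 0)
  else 0

def varPost (b : ℤ) (l : Fin 5) : ℕ :=
  if l = 0 then b.toNat else if l = 1 then (-b).toNat else 0

def Fm (p : Fin n ⊕ Fin (5 * k)) (t : Fin n ⊕ Fin k × Fin 5) : ℕ :=
  match p, t with
  | .inl j, .inl j' => if j = j' then 1 else 0
  | .inl _, .inr _ => 0
  | .inr _, .inl _ => 0
  | .inr q, .inr il =>
      if (pl.symm q).1 = il.1 then preT (md op (pl.symm q).1) (pl.symm q).2 il.2 else 0

def Fp (p : Fin n ⊕ Fin (5 * k)) (t : Fin n ⊕ Fin k × Fin 5) : ℕ :=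
  match p, t with
  | .inl _, _ => 0
  | .inr q, .inl j => varPost (bco a c op (pl.symm q).1 j) (pl.symm q).2
  | .inr q, .inr il =>
      if (pl.symm q).1 = il.1 then
        postT (md op (pl.symm q).1) (eco a c op (pl.symm q).1) (pl.symm q).2 il.2
      else 0

def net : PetriNet (Fin n ⊕ Fin (5 * k)) (Fin n ⊕ Fin k × Fin 5) := ⟨Fm op, Fp a c op⟩

def yvec : Fin (5 * k) → ℝ := fun q =>
  if (pl.symm q).2 = 2 then 1
  else if (pl.symm q).2 = 4 ∧ md op (pl.symm q).1 = Mode.mst then 1 else 0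

lemma yvec_nonneg (q : Fin (5 * k)) : 0 ≤ yvec op q := by
  unfold yvec; split <;> [norm_num; split <;> norm_num]

lemma yvec_pl (i : Fin k) (l : Fin 5) :
    yvec op (pl (i, l)) =
      if l = 2 then 1 else if l = 4 ∧ md op i = Mode.mst then 1 else 0 := by
  simp [yvec]

/-! ### evaluation lemmas -/

@[simp] lemma Fm_inl_inl (j j' : Fin n) :
    Fm op (Sum.inl j : Fin n ⊕ Fin (5 * k)) (Sum.inl j') = if j = j' then 1 else 0 := rfl

@[simp] lemma Fm_inl_inr (j : Fin n) (il : Fin k × Fin 5) :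
    Fm op (Sum.inl j : Fin n ⊕ Fin (5 * k)) (Sum.inr il) = 0 := rfl

@[simp] lemma Fm_pls_inl (i : Fin k) (l : Fin 5) (j : Fin n) :
    Fm op (pls i l : Fin n ⊕ Fin (5 * k)) (Sum.inl j) = 0 := rfl

@[simp] lemma Fm_pls_inr (i : Fin k) (l : Fin 5) (il : Fin k × Fin 5) :
    Fm op (pls i l : Fin n ⊕ Fin (5 * k)) (Sum.inr il)
      = if i = il.1 then preT (md op i) l il.2 else 0 := by
  show (if (pl.symm (pl (i, l))).1 = il.1 then _ else 0) = _
  simp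

@[simp] lemma Fp_inl (j : Fin n) (t : Fin n ⊕ Fin k × Fin 5) :
    Fp a c op (Sum.inl j : Fin n ⊕ Fin (5 * k)) t = 0 := by cases t <;> rfl

@[simp] lemma Fp_pls_inl (i : Fin k) (l : Fin 5) (j : Fin n) :
    Fp a c op (pls i l : Fin n ⊕ Fin (5 * k)) (Sum.inl j)
      = varPost (bco a c op i j) l := by
  show varPost (bco a c op (pl.symm (pl (i, l))).1 j) (pl.symm (pl (i, l))).2 = _
  simp

@[simp] lemma Fp_pls_inr (i : Fin k) (l : Fin 5) (il : Fin k × Fin 5) :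
    Fp a c op (pls i l : Fin n ⊕ Fin (5 * k)) (Sum.inr il)
      = if i = il.1 then postT (md op i) (eco a c op i) l il.2 else 0 := by
  show (if (pl.symm (pl (i, l))).1 = il.1 then _ else 0) = _
  simp

lemma toNat_sub_cast (z : ℤ) : ((z.toNat : ℕ) : ℝ) - (((-z).toNat : ℕ) : ℝ) = (z : ℝ) := by
  have := Int.toNat_sub_toNat_neg z
  exact_mod_cast this

/-! ### weights -/

def wAux (e : ℤ) (l : Fin 5) : ℝ :=
  if l = 0 then 1 else if l = 1 then -1 else if l = 2 then -(e : ℝ) else 0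

def wgt (i : Fin k) : (Fin n ⊕ Fin (5 * k)) → ℝ
  | .inl j => ((bco a c op i j : ℤ) : ℝ)
  | .inr q => if (pl.symm q).1 = i then wAux (eco a c op i) (pl.symm q).2 else 0

@[simp] lemma wgt_inl (i : Fin k) (j : Fin n) :
    wgt a c op i (Sum.inl j : Fin n ⊕ Fin (5 * k)) = ((bco a c op i j : ℤ) : ℝ) := rfl

@[simp] lemma wgt_pls (i i' : Fin k) (l : Fin 5) :
    wgt a c op i (pls i' l : Fin n ⊕ Fin (5 * k))
      = if i' = i then wAux (eco a c op i) l else 0 := by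
  show (if (pl.symm (pl (i', l))).1 = i then _ else 0) = _
  simp

lemma eff_net (t : Fin n ⊕ Fin k × Fin 5) (p : Fin n ⊕ Fin (5 * k)) :
    eff (net a c op) t p = ((Fp a c op p t : ℕ) : ℝ) - ((Fm op p t : ℕ) : ℝ) := rfl

lemma net_post (t : Fin n ⊕ Fin k × Fin 5) (p : Fin n ⊕ Fin (5 * k)) :
    (net a c op).post t p = ((Fp a c op p t : ℕ) : ℝ) := rfl

lemma net_pre (t : Fin n ⊕ Fin k × Fin 5) (p : Fin n ⊕ Fin (5 * k)) :
    (net a c op).pre t p = ((Fm op p t : ℕ) : ℝ) := rfl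

lemma sum_places (g : (Fin n ⊕ Fin (5 * k)) → ℝ) :
    ∑ p, g p = (∑ j, g (Sum.inl j)) + ∑ i : Fin k, ∑ l : Fin 5, g (pls i l) := by
  rw [Fintype.sum_sum_type]
  congr 1
  rw [← Equiv.sum_comp (pl (k := k)) (fun q => g (Sum.inr q)), Fintype.sum_prod_type]
  rfl

lemma sum_w_eff_inl (i : Fin k) (j : Fin n) :
    ∑ p, wgt a c op i p * eff (net a c op) (Sum.inl j) p = 0 := by
  rw [sum_places]
  have h1 : (∑ j', wgt a c op i (Sum.inl j' : Fin n ⊕ Fin (5 * k))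
      * eff (net a c op) (Sum.inl j) (Sum.inl j')) = -((bco a c op i j : ℤ) : ℝ) := by
    rw [Finset.sum_eq_single_of_mem j (Finset.mem_univ j)]
    · simp [eff_net]
    · intro j' _ hne
      simp [eff_net, Fm_inl_inl, hne]
  have h2 : ∀ i' l, wgt a c op i (pls i' l : Fin n ⊕ Fin (5 * k))
      * eff (net a c op) (Sum.inl j) (pls i' l)
      = if i' = i then wAux (eco a c op i) l * ((varPost (bco a c op i j) l : ℕ) : ℝ) else 0 := by
    intro i' l
    rw [eff_net, Fp_pls_inl, Fm_pls_inl, wgt_pls]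
    by_cases h : i' = i
    · subst h; simp
    · simp [h]
  have h3 : (∑ i' : Fin k, ∑ l : Fin 5, wgt a c op i (pls i' l : Fin n ⊕ Fin (5 * k))
      * eff (net a c op) (Sum.inl j) (pls i' l)) = ((bco a c op i j : ℤ) : ℝ) := by
    simp only [h2]
    rw [Finset.sum_comm]
    simp only [Finset.sum_ite_eq' Finset.univ i
      (fun i'' => wAux (eco a c op i) _ * _), Finset.mem_univ, if_true]
    rw [Fin.sum_univ_five]
    have := toNat_sub_cast (bco a c op i j)
    simp [wAux, varPost]
    linarith
  rw [h1, h3]; ring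

lemma sum_w_eff_inr (i i₀ : Fin k) (l' : Fin 5) :
    ∑ p, wgt a c op i p * eff (net a c op) (Sum.inr (i₀, l')) p
      = if i₀ = i ∧ l' = 2 ∧ md op i ≠ Mode.meq then 1 else 0 := by
  rw [sum_places]
  have h1 : (∑ j', wgt a c op i (Sum.inl j' : Fin n ⊕ Fin (5 * k))
      * eff (net a c op) (Sum.inr (i₀, l')) (Sum.inl j')) = 0 := by
    apply Finset.sum_eq_zero; intro j' _
    simp [eff_net]
  rw [h1, zero_add]
  have h2 : ∀ i' l, wgt a c op i (pls i' l : Fin n ⊕ Fin (5 * k))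
      * eff (net a c op) (Sum.inr (i₀, l')) (pls i' l)
      = if i' = i then
          (if i = i₀ then wAux (eco a c op i) l *
            (((postT (md op i) (eco a c op i) l l' : ℕ) : ℝ)
              - ((preT (md op i) l l' : ℕ) : ℝ)) else 0)
        else 0 := by
    intro i' l
    rw [eff_net, Fp_pls_inr, Fm_pls_inr, wgt_pls]
    by_cases h : i' = i
    · subst h
      by_cases h2 : i' = i₀ <;> simp [h2]
    · simp [h]
  simp only [h2]
  rw [Finset.sum_comm]
  simp only [Finset.sum_ite_eq' Finset.univ i, Finset.mem_univ, if_true]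
  by_cases hii : i₀ = i
  · subst hii
    simp only [if_true, eq_self_iff_true, true_and]
    rw [Fin.sum_univ_five]
    have hE := toNat_sub_cast (eco a c op i₀)
    have hE' := toNat_sub_cast (-(eco a c op i₀))
    rw [neg_neg] at hE'
    fin_cases l' <;> rcases hmd : md op i₀ with _|_|_ <;>
      simp [preT, postT, wAux, hmd] <;> push_cast <;> linarith
  · have : ¬ (i = i₀) := fun h => hii h.symm
    simp [this, hii]

/-! ### backward direction -/

lemma w_eff_nonneg (i : Fin k) (t : Fin n ⊕ Fin k × Fin 5) :
    0 ≤ ∑ p, wgt a c op i p * eff (net a c op) t p := by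
  rcases t with j | ⟨i₀, l'⟩
  · rw [sum_w_eff_inl]
  · rw [sum_w_eff_inr]; split <;> norm_num

lemma w_eff_zero_of_meq (i : Fin k) (hmd : md op i = Mode.meq) (t : Fin n ⊕ Fin k × Fin 5) :
    ∑ p, wgt a c op i p * eff (net a c op) t p = 0 := by
  rcases t with j | ⟨i₀, l'⟩
  · rw [sum_w_eff_inl]
  · rw [sum_w_eff_inr]
    simp [hmd]

lemma lf_start (i : Fin k) (x : Fin n → ℝ) :
    lf (wgt a c op i) (Sum.elim x (yvec op))
      = (∑ j, ((bco a c op i j : ℤ) : ℝ) * x j) - ((eco a c op i : ℤ) : ℝ) := by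
  rw [lf, sum_places]
  have h1 : (∑ j, wgt a c op i (Sum.inl j : Fin n ⊕ Fin (5 * k)) * Sum.elim x (yvec op) (Sum.inl j))
      = ∑ j, ((bco a c op i j : ℤ) : ℝ) * x j := by
    refine Finset.sum_congr rfl fun j _ => ?_; simp
  have h2 : ∀ (i' : Fin k) (l : Fin 5),
      wgt a c op i (pls i' l : Fin n ⊕ Fin (5 * k)) * Sum.elim x (yvec op) (pls i' l)
      = if i' = i then wAux (eco a c op i) l * yvec op (pl (i', l)) else 0 := by
    intro i' l
    rw [wgt_pls]
    by_cases h : i' = i <;> simp [h, pls]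
  have h3 : (∑ i' : Fin k, ∑ l : Fin 5,
      wgt a c op i (pls i' l : Fin n ⊕ Fin (5 * k)) * Sum.elim x (yvec op) (pls i' l))
      = - ((eco a c op i : ℤ) : ℝ) := by
    simp only [h2]
    rw [Finset.sum_comm]
    simp only [Finset.sum_ite_eq' Finset.univ i, Finset.mem_univ, if_true]
    rw [Fin.sum_univ_five]
    simp only [yvec_pl]
    simp [wAux]
  rw [h1, h3]; ring

lemma lf_zero_end (i : Fin k) : lf (wgt a c op i) (0 : (Fin n ⊕ Fin (5 * k)) → ℝ) = 0 := by
  simp [lf]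

lemma backward (i : Fin k) (x : Fin n → ℝ)
    (hrun : Relation.ReflTransGen (net a c op).step (Sum.elim x (yvec op)) 0) :
    (md op i).req (∑ j, ((bco a c op i j : ℤ) : ℝ) * x j) ((eco a c op i : ℤ) : ℝ) := by
  have hle : lf (wgt a c op i) (Sum.elim x (yvec op)) ≤ 0 := by
    have := lf_mono (net a c op) (wgt a c op i) (w_eff_nonneg a c op i) hrun
    rwa [lf_zero_end] at this
  rcases hmd : md op i with _ | _ | _
  · -- meq
    have hneg : ∀ m0 : (Fin n ⊕ Fin (5 * k)) → ℝ,
        lf (fun p => - wgt a c op i p) m0 = - lf (wgt a c op i) m0 := by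
      intro m0
      simp only [lf, neg_mul]
      exact Finset.sum_neg_distrib _
    have hge : 0 ≤ lf (wgt a c op i) (Sum.elim x (yvec op)) := by
      have hmono := lf_mono (net a c op) (fun p => - wgt a c op i p) (fun t => by
        have h1 : ∑ p, (fun p => - wgt a c op i p) p * eff (net a c op) t p
            = - ∑ p, wgt a c op i p * eff (net a c op) t p := by
          simp only [neg_mul]
          exact Finset.sum_neg_distrib _
        rw [h1, w_eff_zero_of_meq a c op i hmd t]
        norm_num) hrun
      rw [hneg, hneg, lf_zero_end] at hmono
      linarith
    have h0 : lf (wgt a c op i) (Sum.elim x (yvec op)) = 0 := le_antisymm hle hge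
    rw [lf_start] at h0
    show _ = _
    linarith
  · -- mns
    rw [lf_start] at hle
    show _ ≤ _
    linarith
  · -- mst
    rw [lf_start] at hle
    show _ < _
    rcases lt_or_eq_of_le (by linarith : (∑ j, ((bco a c op i j : ℤ) : ℝ) * x j) ≤ ((eco a c op i : ℤ) : ℝ)) with h | h
    · exact h
    -- equality case: contradiction via sandwich
    exfalso
    have hstart0 : lf (wgt a c op i) (Sum.elim x (yvec op)) = 0 := by rw [lf_start]; linarith
    have hQ := sandwich (net a c op) (wgt a c op i) (w_eff_nonneg a c op i)
      (fun m => m (pls i 3 : Fin n ⊕ Fin (5 * k)) = 0 ∧ m (pls i 4 : Fin n ⊕ Fin (5 * k)) = 1)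
      ?hstep hrun (by rw [lf_zero_end, hstart0]) ?hQ0
    · exact absurd hQ.2 (by norm_num)
    case hQ0 =>
      constructor
      · simp [pls, yvec_pl]
      · simp [pls, yvec_pl, hmd]
    case hstep =>
      rintro m m' ⟨t, α, hα, hpre, heq⟩ hlf ⟨hD, hV⟩
      have hE : α * ∑ p, wgt a c op i p * eff (net a c op) t p = 0 := by
        have := lf_fire (net a c op) (wgt a c op i) ⟨hα, hpre, heq⟩
        linarith
      have hE0 : ∑ p, wgt a c op i p * eff (net a c op) t p = 0 := by
        rcases mul_eq_zero.mp hE with h | h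
        · exact absurd h (ne_of_gt hα)
        · exact h
      rcases t with j | ⟨i₀, l'⟩
      · -- variable transition: does not touch D, V
        constructor
        · rw [heq _, net_post, net_pre, Fp_pls_inl, Fm_pls_inl]
          simp [varPost, hD]
        · rw [heq _, net_post, net_pre, Fp_pls_inl, Fm_pls_inl]
          simp [varPost, hV]
      · by_cases hi : i = i₀
        · subst hi
          fin_cases l'
          · -- u transition
            constructor
            · rw [heq _, net_post, net_pre, Fp_pls_inr, Fm_pls_inr]; simp [preT, postT, hD]
            · rw [heq _, net_post, net_pre, Fp_pls_inr, Fm_pls_inr]; simp [preT, postT, hV]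
          · constructor
            · rw [heq _, net_post, net_pre, Fp_pls_inr, Fm_pls_inr]; simp [preT, postT, hD]
            · rw [heq _, net_post, net_pre, Fp_pls_inr, Fm_pls_inr]; simp [preT, postT, hV]
          · -- r transition : contradicts hE0
            rw [sum_w_eff_inr] at hE0
            simp [hmd] at hE0
          · -- d transition : cannot fire since D = 0
            exfalso
            have h3 := hpre (pls i 3 : Fin n ⊕ Fin (5 * k))
            rw [net_pre, Fm_pls_inr, hD] at h3
            simp [preT, hmd] at h3
            linarith
          · -- g transition : cannot fire since D = 0
            exfalso
            have h3 := hpre (pls i 3 : Fin n ⊕ Fin (5 * k))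
            rw [net_pre, Fm_pls_inr, hD] at h3
            simp [preT, hmd] at h3
            linarith
        · constructor
          · rw [heq _, net_post, net_pre, Fp_pls_inr, Fm_pls_inr]; simp [hi, hD]
          · rw [heq _, net_post, net_pre, Fp_pls_inr, Fm_pls_inr]; simp [hi, hV]

/-! ### forward direction -/

lemma rtg_finset {P T ι : Type*} [DecidableEq ι] [Fintype ι] (N : PetriNet P T)
    (M : Finset ι → (P → ℝ))
    (hstep : ∀ s, ∀ j ∉ s, Relation.ReflTransGen N.step (M s) (M (insert j s))) :
    Relation.ReflTransGen N.step (M ∅) (M Finset.univ) := by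
  suffices h : ∀ s : Finset ι, Relation.ReflTransGen N.step (M ∅) (M s) from h _
  intro s
  induction s using Finset.induction_on with
  | empty => exact Relation.ReflTransGen.refl
  | insert _ _ hj ih => exact ih.trans (hstep _ _ hj)

lemma place_cases (p : Fin n ⊕ Fin (5 * k)) :
    (∃ j, p = Sum.inl j) ∨ ∃ i l, p = (pls i l : Fin n ⊕ Fin (5 * k)) := by
  rcases p with j | q
  · exact Or.inl ⟨j, rfl⟩
  · exact Or.inr ⟨(pl.symm q).1, (pl.symm q).2, by simp [pls]⟩

lemma pls_eq_iff (i i' : Fin k) (l l' : Fin 5) :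
    (pls i l : Fin n ⊕ Fin (5 * k)) = pls i' l' ↔ i = i' ∧ l = l' := by
  constructor
  · intro h
    have : (i, l) = (i', l') := pl.injective (Sum.inr_injective h)
    exact ⟨congrArg Prod.fst this, congrArg Prod.snd this⟩
  · rintro ⟨rfl, rfl⟩; rfl

def Sp (i : Fin k) (x : Fin n → ℝ) : ℝ :=
  (∑ j, (((bco a c op i j).toNat : ℕ) : ℝ) * x j) + (((-eco a c op i).toNat : ℕ) : ℝ)

def Sm (i : Fin k) (x : Fin n → ℝ) : ℝ :=
  (∑ j, (((-bco a c op i j).toNat : ℕ) : ℝ) * x j) + (((eco a c op i).toNat : ℕ) : ℝ)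

lemma Sp_nonneg (i : Fin k) (x : Fin n → ℝ) (hx : ∀ j, 0 ≤ x j) : 0 ≤ Sp a c op i x := by
  unfold Sp
  exact add_nonneg (Finset.sum_nonneg fun j _ => mul_nonneg (Nat.cast_nonneg _) (hx j))
    (Nat.cast_nonneg _)

lemma Sm_nonneg (i : Fin k) (x : Fin n → ℝ) (hx : ∀ j, 0 ≤ x j) : 0 ≤ Sm a c op i x := by
  unfold Sm
  exact add_nonneg (Finset.sum_nonneg fun j _ => mul_nonneg (Nat.cast_nonneg _) (hx j))
    (Nat.cast_nonneg _)

lemma Sm_sub_Sp (i : Fin k) (x : Fin n → ℝ) :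
    Sm a c op i x - Sp a c op i x
      = ((eco a c op i : ℤ) : ℝ) - ∑ j, ((bco a c op i j : ℤ) : ℝ) * x j := by
  unfold Sm Sp
  have h1 : (∑ j, (((-bco a c op i j).toNat : ℕ) : ℝ) * x j)
      - (∑ j, (((bco a c op i j).toNat : ℕ) : ℝ) * x j)
      = ∑ j, (-((bco a c op i j : ℤ) : ℝ)) * x j := by
    rw [← Finset.sum_sub_distrib]
    refine Finset.sum_congr rfl fun j _ => ?_
    have h := toNat_sub_cast (-(bco a c op i j))
    rw [neg_neg] at h
    push_cast at h ⊢
    linear_combination x j * h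
  have h2 := toNat_sub_cast (eco a c op i)
  have h3 : (∑ j, (-((bco a c op i j : ℤ) : ℝ)) * x j)
      = - ∑ j, ((bco a c op i j : ℤ) : ℝ) * x j := by
    rw [← Finset.sum_neg_distrib]
    exact Finset.sum_congr rfl fun j _ => by ring
  rw [show (∑ j, (((-bco a c op i j).toNat : ℕ) : ℝ) * x j) + (((eco a c op i).toNat : ℕ) : ℝ)
      - ((∑ j, (((bco a c op i j).toNat : ℕ) : ℝ) * x j) + (((-eco a c op i).toNat : ℕ) : ℝ))
      = ((∑ j, (((-bco a c op i j).toNat : ℕ) : ℝ) * x j)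
        - (∑ j, (((bco a c op i j).toNat : ℕ) : ℝ) * x j))
        + ((((eco a c op i).toNat : ℕ) : ℝ) - (((-eco a c op i).toNat : ℕ) : ℝ)) from by ring]
  rw [h1, h3, h2]
  ring

def yvl (i : Fin k) : ℝ := if md op i = Mode.mst then 1 else 0

def aux1 (x : Fin n → ℝ) (i : Fin k) (l : Fin 5) : ℝ :=
  if l = 0 then ∑ j, (((bco a c op i j).toNat : ℕ) : ℝ) * x j
  else if l = 1 then ∑ j, (((-bco a c op i j).toNat : ℕ) : ℝ) * x j
  else if l = 2 then 1
  else if l = 4 then yvl op i else 0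

def aux2 (x : Fin n → ℝ) (i : Fin k) (l : Fin 5) : ℝ :=
  if l = 0 then Sp a c op i x
  else if l = 1 then Sm a c op i x
  else if l = 4 then yvl op i else 0

lemma yvl_nonneg (i : Fin k) : 0 ≤ yvl op i := by unfold yvl; split <;> norm_num

lemma aux1_nonneg (x : Fin n → ℝ) (hx : ∀ j, 0 ≤ x j) (i : Fin k) (l : Fin 5) :
    0 ≤ aux1 a c op x i l := by
  unfold aux1
  have : ∀ z : ℤ, ∀ j, (0:ℝ) ≤ ((z.toNat : ℕ) : ℝ) * x j :=
    fun z j => mul_nonneg (Nat.cast_nonneg _) (hx j)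
  split
  · exact Finset.sum_nonneg fun j _ => this _ j
  · split
    · exact Finset.sum_nonneg fun j _ => this _ j
    · split
      · norm_num
      · split
        · exact yvl_nonneg op i
        · exact le_refl 0

lemma aux2_nonneg (x : Fin n → ℝ) (hx : ∀ j, 0 ≤ x j) (i : Fin k) (l : Fin 5) :
    0 ≤ aux2 a c op x i l := by
  unfold aux2
  split
  · exact Sp_nonneg a c op i x hx
  · split
    · exact Sm_nonneg a c op i x hx
    · split
      · exact yvl_nonneg op i
      · exact le_refl 0

def mark1 (x : Fin n → ℝ) : (Fin n ⊕ Fin (5 * k)) → ℝ :=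
  Sum.elim 0 (fun q => aux1 a c op x (pl.symm q).1 (pl.symm q).2)

def mark2 (x : Fin n → ℝ) : (Fin n ⊕ Fin (5 * k)) → ℝ :=
  Sum.elim 0 (fun q => aux2 a c op x (pl.symm q).1 (pl.symm q).2)

lemma aux1_formula (x : Fin n → ℝ) (i : Fin k) (l : Fin 5) :
    (if l = 2 then (1:ℝ) else if l = 4 ∧ md op i = Mode.mst then 1 else 0)
      + ∑ j, ((varPost (bco a c op i j) l : ℕ) : ℝ) * x j = aux1 a c op x i l := by
  fin_cases l <;> simp [varPost, aux1, yvl]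

lemma phase1 (x : Fin n → ℝ) (hx : ∀ j, 0 ≤ x j) :
    Relation.ReflTransGen (net a c op).step (Sum.elim x (yvec op)) (mark1 a c op x) := by
  set M : Finset (Fin n) → (Fin n ⊕ Fin (5 * k)) → ℝ := fun s =>
    Sum.elim (fun j => if j ∈ s then 0 else x j)
      (fun q => yvec op q + ∑ j ∈ s, ((Fp a c op (Sum.inr q) (Sum.inl j) : ℕ) : ℝ) * x j)
    with hM
  have hnn : ∀ s q, (0:ℝ) ≤ yvec op q + ∑ j ∈ s, ((Fp a c op (Sum.inr q) (Sum.inl j) : ℕ) : ℝ) * x j := by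
    intro s q
    exact add_nonneg (yvec_nonneg op q)
      (Finset.sum_nonneg fun j _ => mul_nonneg (Nat.cast_nonneg _) (hx j))
  have h0 : M ∅ = Sum.elim x (yvec op) := by
    funext p; rcases p with j | q <;> simp [hM]
  have h1 : M Finset.univ = mark1 a c op x := by
    funext p; rcases p with j | q
    · simp [hM, mark1]
    · show yvec op q + ∑ j, ((Fp a c op (Sum.inr q) (Sum.inl j) : ℕ) : ℝ) * x j
        = aux1 a c op x (pl.symm q).1 (pl.symm q).2
      have hy : yvec op q = (if (pl.symm q).2 = 2 then (1:ℝ)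
          else if (pl.symm q).2 = 4 ∧ md op (pl.symm q).1 = Mode.mst then 1 else 0) := rfl
      have hfp : ∀ j, Fp a c op (Sum.inr q) (Sum.inl j)
          = varPost (bco a c op (pl.symm q).1 j) (pl.symm q).2 := fun j => rfl
      rw [hy]
      simp only [hfp]
      exact aux1_formula a c op x (pl.symm q).1 (pl.symm q).2
  rw [← h0, ← h1]
  apply rtg_finset
  intro s j hj
  by_cases hxj : x j = 0
  · have : M (insert j s) = M s := by
      funext p; rcases p with j' | q
      · by_cases hjj : j' = j
        · subst hjj
          simp [hM, hj, hxj]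
        · simp [hM, Finset.mem_insert, hjj]
      · simp [hM, Finset.sum_insert hj, hxj]
    rw [this]
  · have hxj' : 0 < x j := lt_of_le_of_ne (hx j) (Ne.symm hxj)
    apply Relation.ReflTransGen.single
    have hpre : ∀ p, x j * (net a c op).pre (Sum.inl j) p ≤ M s p := by
      intro p; rcases p with j' | q
      · rw [net_pre, Fm_inl_inl]
        by_cases hjj : j' = j
        · subst hjj
          simp [hM, hj]
        · simp only [hM, Sum.elim_inl]
          rw [if_neg (fun h => hjj h), Nat.cast_zero, mul_zero]
          split
          · norm_num
          · exact hx j'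
      · rw [net_pre]
        show x j * ((0:ℕ):ℝ) ≤ _
        rw [Nat.cast_zero, mul_zero]; exact hnn s q
    have hs := mkstep (net a c op) (Sum.inl j) hxj' hpre
    have hEq : (fun p => M s p + x j * eff (net a c op) (Sum.inl j) p) = M (insert j s) := by
      funext p; rcases p with j' | q
      · rw [eff_net, Fp_inl, Fm_inl_inl]
        by_cases hjj : j' = j
        · subst hjj
          simp [hM, hj]
        · simp [hM, Finset.mem_insert, hjj]
      · have : eff (net a c op) (Sum.inl j) (Sum.inr q)
            = ((Fp a c op (Sum.inr q) (Sum.inl j) : ℕ) : ℝ) := by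
          rw [eff_net]; show _ - ((0:ℕ):ℝ) = _; simp
        rw [this]
        simp only [hM, Sum.elim_inr]
        rw [Finset.sum_insert hj]
        ring
    rw [← hEq]
    exact hs

lemma phase2 (x : Fin n → ℝ) (hx : ∀ j, 0 ≤ x j) :
    Relation.ReflTransGen (net a c op).step (mark1 a c op x) (mark2 a c op x) := by
  set M : Finset (Fin k) → (Fin n ⊕ Fin (5 * k)) → ℝ := fun s =>
    Sum.elim 0 (fun q => if (pl.symm q).1 ∈ s then aux2 a c op x (pl.symm q).1 (pl.symm q).2
      else aux1 a c op x (pl.symm q).1 (pl.symm q).2) with hM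
  have hval : ∀ s (i' : Fin k) (l : Fin 5), M s (pls i' l : Fin n ⊕ Fin (5 * k))
      = if i' ∈ s then aux2 a c op x i' l else aux1 a c op x i' l := by
    intro s i' l
    simp [hM, pls]
  have hnn : ∀ s p, 0 ≤ M s p := by
    intro s p
    rcases p with j | q
    · simp [hM]
    · simp only [hM, Sum.elim_inr]
      split
      · exact aux2_nonneg a c op x hx _ _
      · exact aux1_nonneg a c op x hx _ _
  have h0 : M ∅ = mark1 a c op x := by
    funext p; rcases p with j | q <;> simp [hM, mark1]
  have h1 : M Finset.univ = mark2 a c op x := by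
    funext p; rcases p with j | q <;> simp [hM, mark2]
  rw [← h0, ← h1]
  apply rtg_finset
  intro s i hi
  apply Relation.ReflTransGen.single
  have hpre : ∀ p, (1:ℝ) * (net a c op).pre (Sum.inr (i, 0)) p ≤ M s p := by
    intro p
    rcases place_cases (n := n) (k := k) p with ⟨j, rfl⟩ | ⟨i', l, rfl⟩
    · rw [net_pre]
      show (1:ℝ) * ((0:ℕ):ℝ) ≤ _
      simpa using hnn s (Sum.inl j)
    · rw [net_pre, Fm_pls_inr, hval]
      by_cases hii : i' = i
      · subst hii
        rw [if_pos rfl, if_neg hi]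
        have hp : ((preT (md op i') l 0 : ℕ) : ℝ) = if l = 2 then 1 else 0 := by
          fin_cases l <;> simp [preT]
        rw [hp, one_mul]
        by_cases hl : l = (2 : Fin 5)
        · subst hl; simp [aux1]
        · rw [if_neg hl]; exact aux1_nonneg a c op x hx i' l
      · rw [if_neg hii]
        simp only [one_mul, Nat.cast_zero]
        split
        · exact aux2_nonneg a c op x hx _ _
        · exact aux1_nonneg a c op x hx _ _
  have hs := mkstep (net a c op) (Sum.inr (i, 0)) one_pos hpre
  have hEq : (fun p => M s p + 1 * eff (net a c op) (Sum.inr (i, 0)) p) = M (insert i s) := by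
    funext p
    rcases place_cases (n := n) (k := k) p with ⟨j, rfl⟩ | ⟨i', l, rfl⟩
    · rw [eff_net, Fp_inl]
      show M s (Sum.inl j) + 1 * (((0:ℕ):ℝ) - ((0:ℕ):ℝ)) = M (insert i s) (Sum.inl j)
      simp [hM]
    · rw [eff_net, Fp_pls_inr, Fm_pls_inr, hval, hval]
      by_cases hii : i' = i
      · subst hii
        simp only [if_pos rfl, hi, if_neg hi, Finset.mem_insert, true_or, if_true]
        fin_cases l <;>
          simp [preT, postT, aux1, aux2, Sp, Sm] <;> ring
      · rw [if_neg hii, if_neg hii]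
        have h4 : (i' ∈ insert i s) = (i' ∈ s) := by
          simp [Finset.mem_insert, hii]
        simp [h4]
  rw [← hEq]
  exact hs

def mkv (i : Fin k) (B : Fin k → Fin 5 → ℝ) (v : Fin 5 → ℝ) : (Fin n ⊕ Fin (5 * k)) → ℝ :=
  Sum.elim 0 (fun q => if (pl.symm q).1 = i then v (pl.symm q).2
    else B (pl.symm q).1 (pl.symm q).2)

lemma mkv_pls (i : Fin k) (B : Fin k → Fin 5 → ℝ) (v : Fin 5 → ℝ) (i' : Fin k) (l : Fin 5) :
    mkv i B v (pls i' l : Fin n ⊕ Fin (5 * k)) = if i' = i then v l else B i' l := by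
  simp [mkv, pls]

lemma mk_fire (i : Fin k) (B : Fin k → Fin 5 → ℝ) (hB : ∀ i' l, 0 ≤ B i' l)
    (v : Fin 5 → ℝ) (kind : Fin 5) (α : ℝ) (hα : 0 < α)
    (hpre : ∀ l, α * ((preT (md op i) l kind : ℕ) : ℝ) ≤ v l) :
    (net a c op).step (mkv i B v)
      (mkv i B (fun l => v l + α * (((postT (md op i) (eco a c op i) l kind : ℕ) : ℝ)
        - ((preT (md op i) l kind : ℕ) : ℝ)))) := by
  have hp : ∀ p, α * (net a c op).pre (Sum.inr (i, kind)) p ≤ mkv i B v p := by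
    intro p
    rcases place_cases (n := n) (k := k) p with ⟨j, rfl⟩ | ⟨i', l, rfl⟩
    · rw [net_pre]
      show α * ((0:ℕ):ℝ) ≤ _
      simp [mkv]
    · rw [net_pre, Fm_pls_inr, mkv_pls]
      by_cases hii : i' = i
      · subst hii
        rw [if_pos rfl, if_pos rfl]
        exact hpre l
      · rw [if_neg hii, if_neg hii, Nat.cast_zero, mul_zero]
        exact hB i' l
  have hs := mkstep (net a c op) (Sum.inr (i, kind)) hα hp
  have hEq : (fun p => mkv i B v p + α * eff (net a c op) (Sum.inr (i, kind)) p)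
      = mkv i B (fun l => v l + α * (((postT (md op i) (eco a c op i) l kind : ℕ) : ℝ)
        - ((preT (md op i) l kind : ℕ) : ℝ))) := by
    funext p
    rcases place_cases (n := n) (k := k) p with ⟨j, rfl⟩ | ⟨i', l, rfl⟩
    · rw [eff_net, Fp_inl]
      show mkv i B v (Sum.inl j) + α * (((0:ℕ):ℝ) - ((Fm op (Sum.inl j) (Sum.inr (i, kind)) : ℕ) : ℝ))
        = mkv i B _ (Sum.inl j)
      simp [mkv, Fm_inl_inr]
    · rw [eff_net, Fp_pls_inr, Fm_pls_inr, mkv_pls, mkv_pls]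
      by_cases hii : i' = i
      · subst hii
        simp
      · simp [hii]
  rw [← hEq]
  exact hs

lemma gclear (i : Fin k) (hmd : md op i = Mode.mst) (B : Fin k → Fin 5 → ℝ)
    (hB : ∀ i' l, 0 ≤ B i' l) :
    ∀ (N : ℕ) (v : Fin 5 → ℝ), (∀ l, 0 ≤ v l) → 0 < v 3 → v 4 ≤ N * v 3 →
      Relation.ReflTransGen (net a c op).step (mkv i B v)
        (mkv i B (fun l => if l = 4 then 0 else v l)) := by
  intro N
  induction N with
  | zero =>
    intro v hv h3 h4
    have h40 : v 4 = 0 := le_antisymm (by simpa using h4) (hv 4)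
    have : (fun l => if l = (4:Fin 5) then (0:ℝ) else v l) = v := by
      funext l
      by_cases hl : l = (4:Fin 5)
      · subst hl; simp [h40]
      · simp [hl]
    rw [this]
  | succ N ih =>
    intro v hv h3 h4
    by_cases h40 : v 4 = 0
    · have : (fun l => if l = (4:Fin 5) then (0:ℝ) else v l) = v := by
        funext l
        by_cases hl : l = (4:Fin 5)
        · subst hl; simp [h40]
        · simp [hl]
      rw [this]
    · have h4pos : 0 < v 4 := lt_of_le_of_ne (hv 4) (Ne.symm h40)
      set α := min (v 4) (v 3) with hαdef
      have hαpos : 0 < α := lt_min h4pos h3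
      have hα4 : α ≤ v 4 := min_le_left _ _
      have hα3 : α ≤ v 3 := min_le_right _ _
      have hstep := mk_fire a c op i B hB v 4 α hαpos (by
        intro l
        fin_cases l <;> simp [preT, hmd] <;> [exact hv 0; exact hv 1; exact hv 2; exact hα3; exact hα4])
      set v' : Fin 5 → ℝ := fun l => if l = 4 then v 4 - α else v l with hv'def
      have hveq : (fun l => v l + α * (((postT (md op i) (eco a c op i) l 4 : ℕ) : ℝ)
          - ((preT (md op i) l 4 : ℕ) : ℝ))) = v' := by
        funext l
        fin_cases l <;> simp [postT, preT, hmd, hv'def] <;> ring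
      rw [hveq] at hstep
      have hrest := ih v' (by
          intro l
          fin_cases l <;> simp [hv'def] <;> [exact hv 0; exact hv 1; exact hv 2; linarith [hv 3]; linarith])
        (by simp [hv'def]; exact h3)
        (by
          simp only [hv'def, if_pos rfl]
          show v 4 - α ≤ N * (if (3:Fin 5) = 4 then v 4 - α else v 3)
          rw [if_neg (by decide)]
          rcases min_cases (v 4) (v 3) with ⟨hm, _⟩ | ⟨hm, hle⟩
          · rw [hαdef, hm]
            have : (0:ℝ) ≤ N * v 3 := mul_nonneg (Nat.cast_nonneg _) (le_of_lt h3)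
            linarith
          · rw [hαdef, hm]
            push_cast at h4 ⊢
            linarith)
      have htgt : (fun l => if l = (4:Fin 5) then (0:ℝ) else v' l)
          = (fun l => if l = (4:Fin 5) then (0:ℝ) else v l) := by
        funext l
        by_cases hl : l = (4:Fin 5) <;> simp [hl, hv'def]
      rw [htgt] at hrest
      exact Relation.ReflTransGen.head ⟨_, _, hstep.choose_spec.choose_spec⟩ hrest

lemma fire_to (i : Fin k) (B : Fin k → Fin 5 → ℝ) (hB : ∀ i' l, 0 ≤ B i' l)
    (v v' : Fin 5 → ℝ) (kind : Fin 5) (α : ℝ) (hα : 0 < α)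
    (hpre : ∀ l, α * ((preT (md op i) l kind : ℕ) : ℝ) ≤ v l)
    (hres : ∀ l, v' l = v l + α * (((postT (md op i) (eco a c op i) l kind : ℕ) : ℝ)
        - ((preT (md op i) l kind : ℕ) : ℝ))) :
    (net a c op).step (mkv i B v) (mkv i B v') := by
  have h := mk_fire a c op i B hB v kind α hα hpre
  rwa [show (fun l => v l + α * (((postT (md op i) (eco a c op i) l kind : ℕ) : ℝ)
      - ((preT (md op i) l kind : ℕ) : ℝ))) = v' from funext fun l => (hres l).symm] at h

lemma aux2_vec (x : Fin n → ℝ) (i : Fin k) :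
    (fun l => aux2 a c op x i l)
      = ![Sp a c op i x, Sm a c op i x, 0, 0, yvl op i] := by
  funext l
  fin_cases l <;> simp [aux2]

lemma clear_steps (x : Fin n → ℝ) (hx : ∀ j, 0 ≤ x j) (i : Fin k)
    (B : Fin k → Fin 5 → ℝ) (hB : ∀ i' l, 0 ≤ B i' l)
    (hreq : (md op i).req (∑ j, ((bco a c op i j : ℤ) : ℝ) * x j) ((eco a c op i : ℤ) : ℝ)) :
    Relation.ReflTransGen (net a c op).step
      (mkv i B (fun l => aux2 a c op x i l)) (mkv i B (fun _ => 0)) := by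
  have hSp := Sp_nonneg a c op i x hx
  have hSm := Sm_nonneg a c op i x hx
  have hdiff := Sm_sub_Sp a c op i x
  rw [aux2_vec]
  set SP := Sp a c op i x with hSPd
  set SM := Sm a c op i x with hSMd
  rcases hmd : md op i with _ | _ | _
  · -- meq
    rw [hmd] at hreq
    simp only [Mode.req] at hreq
    have hyvl : yvl op i = 0 := by simp [yvl, hmd]
    have hSpSm : SM = SP := by linarith
    rw [hyvl]
    by_cases h0 : SP = 0
    · have : ![SP, SM, 0, 0, (0:ℝ)] = (fun _ => 0) := by
        funext l; fin_cases l <;> simp [h0, hSpSm]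
      rw [this]
    · apply Relation.ReflTransGen.single
      apply fire_to a c op i B hB _ _ 1 SP
        (lt_of_le_of_ne hSp (Ne.symm h0))
      · intro l
        fin_cases l <;> simp [preT, hmd] <;> linarith
      · intro l
        fin_cases l <;> simp [preT, postT, hmd] <;> linarith
  · -- mns
    rw [hmd] at hreq
    simp only [Mode.req] at hreq
    have hyvl : yvl op i = 0 := by simp [yvl, hmd]
    have hρ : 0 ≤ SM - SP := by linarith
    rw [hyvl]
    have t1 : Relation.ReflTransGen (net a c op).step
        (mkv i B ![SP, SM, 0, 0, (0:ℝ)]) (mkv i B ![0, SM - SP, 0, 0, (0:ℝ)]) := by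
      by_cases h0 : SP = 0
      · rw [show ![SP, SM, 0, 0, (0:ℝ)] = ![0, SM - SP, 0, 0, (0:ℝ)] from by
          funext l; fin_cases l <;> simp [h0]]
      · apply Relation.ReflTransGen.single
        apply fire_to a c op i B hB _ _ 1 SP (lt_of_le_of_ne hSp (Ne.symm h0))
        · intro l; fin_cases l <;> simp [preT, hmd] <;> linarith
        · intro l; fin_cases l <;> simp [preT, postT, hmd] <;> linarith
    have t2 : Relation.ReflTransGen (net a c op).step
        (mkv i B ![0, SM - SP, 0, 0, (0:ℝ)]) (mkv i B ![0, 0, 0, SM - SP, (0:ℝ)]) := by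
      by_cases h0 : SM - SP = 0
      · rw [show ![(0:ℝ), SM - SP, 0, 0, 0] = ![0, 0, 0, SM - SP, 0] from by
          funext l; fin_cases l <;> simp [h0]]
      · apply Relation.ReflTransGen.single
        apply fire_to a c op i B hB _ _ 2 (SM - SP) (lt_of_le_of_ne hρ (Ne.symm h0))
        · intro l; fin_cases l <;> simp [preT, hmd] <;> linarith
        · intro l; fin_cases l <;> simp [preT, postT, hmd] <;> linarith
    have t3 : Relation.ReflTransGen (net a c op).step
        (mkv i B ![0, 0, 0, SM - SP, (0:ℝ)]) (mkv i B (fun _ => 0)) := by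
      by_cases h0 : SM - SP = 0
      · rw [show ![(0:ℝ), 0, 0, SM - SP, 0] = (fun _ => (0:ℝ)) from by
          funext l; fin_cases l <;> simp [h0]]
      · apply Relation.ReflTransGen.single
        apply fire_to a c op i B hB _ _ 3 (SM - SP) (lt_of_le_of_ne hρ (Ne.symm h0))
        · intro l; fin_cases l <;> simp [preT, hmd] <;> linarith
        · intro l; fin_cases l <;> simp [preT, postT, hmd] <;> linarith
    exact (t1.trans t2).trans t3
  · -- mst
    rw [hmd] at hreq
    simp only [Mode.req] at hreq
    have hyvl : yvl op i = 1 := by simp [yvl, hmd]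
    have hρ : 0 < SM - SP := by linarith
    rw [hyvl]
    have t1 : Relation.ReflTransGen (net a c op).step
        (mkv i B ![SP, SM, 0, 0, (1:ℝ)]) (mkv i B ![SP, SP, 0, SM - SP, (1:ℝ)]) := by
      apply Relation.ReflTransGen.single
      apply fire_to a c op i B hB _ _ 2 (SM - SP) hρ
      · intro l; fin_cases l <;> simp [preT, hmd] <;> linarith
      · intro l; fin_cases l <;> simp [preT, postT, hmd] <;> linarith
    have t2 : Relation.ReflTransGen (net a c op).step
        (mkv i B ![SP, SP, 0, SM - SP, (1:ℝ)]) (mkv i B ![SP, SP, 0, SM - SP, (0:ℝ)]) := by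
      obtain ⟨N, hN⟩ := exists_nat_ge (1 / (SM - SP))
      have h1N : (1:ℝ) ≤ N * (SM - SP) := by
        have := (div_le_iff₀ hρ).mp hN
        linarith
      have hg := gclear a c op i hmd B hB N ![SP, SP, 0, SM - SP, (1:ℝ)]
        (by intro l; fin_cases l <;> simp <;> linarith)
        (by show (0:ℝ) < ![SP, SP, 0, SM - SP, (1:ℝ)] 3; simp; linarith)
        (by show ![SP, SP, 0, SM - SP, (1:ℝ)] 4 ≤ N * ![SP, SP, 0, SM - SP, (1:ℝ)] 3
            simp
            linarith)
      rwa [show (fun l => if l = (4:Fin 5) then (0:ℝ) else ![SP, SP, 0, SM - SP, (1:ℝ)] l)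
          = ![SP, SP, 0, SM - SP, (0:ℝ)] from by
        funext l; fin_cases l <;> simp] at hg
    have t3 : Relation.ReflTransGen (net a c op).step
        (mkv i B ![SP, SP, 0, SM - SP, (0:ℝ)]) (mkv i B ![0, 0, 0, SM - SP, (0:ℝ)]) := by
      by_cases h0 : SP = 0
      · rw [show ![SP, SP, 0, SM - SP, (0:ℝ)] = ![0, 0, 0, SM - SP, (0:ℝ)] from by
          funext l; fin_cases l <;> simp [h0]]
      · apply Relation.ReflTransGen.single
        apply fire_to a c op i B hB _ _ 1 SP (lt_of_le_of_ne hSp (Ne.symm h0))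
        · intro l; fin_cases l <;> simp [preT, hmd] <;> linarith
        · intro l; fin_cases l <;> simp [preT, postT, hmd] <;> linarith
    have t4 : Relation.ReflTransGen (net a c op).step
        (mkv i B ![0, 0, 0, SM - SP, (0:ℝ)]) (mkv i B (fun _ => 0)) := by
      apply Relation.ReflTransGen.single
      apply fire_to a c op i B hB _ _ 3 (SM - SP) hρ
      · intro l; fin_cases l <;> simp [preT, hmd] <;> linarith
      · intro l; fin_cases l <;> simp [preT, postT, hmd] <;> linarith
    exact ((t1.trans t2).trans t3).trans t4

lemma phase3 (x : Fin n → ℝ) (hx : ∀ j, 0 ≤ x j)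
    (hreq : ∀ i, (md op i).req (∑ j, ((bco a c op i j : ℤ) : ℝ) * x j) ((eco a c op i : ℤ) : ℝ)) :
    Relation.ReflTransGen (net a c op).step (mark2 a c op x) 0 := by
  set M : Finset (Fin k) → (Fin n ⊕ Fin (5 * k)) → ℝ := fun s =>
    Sum.elim 0 (fun q => if (pl.symm q).1 ∈ s then 0
      else aux2 a c op x (pl.symm q).1 (pl.symm q).2) with hM
  have h0 : M ∅ = mark2 a c op x := by
    funext p; rcases p with j | q <;> simp [hM, mark2]
  have h1 : M Finset.univ = 0 := by
    funext p; rcases p with j | q <;> simp [hM]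
  rw [← h0, ← h1]
  apply rtg_finset
  intro s i hi
  set B : Fin k → Fin 5 → ℝ := fun i' l => if i' ∈ s then 0 else aux2 a c op x i' l with hB
  have hBnn : ∀ i' l, 0 ≤ B i' l := by
    intro i' l
    show 0 ≤ if i' ∈ s then 0 else aux2 a c op x i' l
    split
    · exact le_refl 0
    · exact aux2_nonneg a c op x hx i' l
  have hMs : M s = mkv i B (fun l => aux2 a c op x i l) := by
    funext p
    rcases place_cases (n := n) (k := k) p with ⟨j, rfl⟩ | ⟨i', l, rfl⟩
    · simp [hM, mkv]
    · show M s (pls i' l : Fin n ⊕ Fin (5 * k)) = _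
      rw [mkv_pls]
      by_cases hii : i' = i
      · subst hii
        simp [hM, pls, hi]
      · simp [hM, pls, hii, hB]
  have hMi : M (insert i s) = mkv i B (fun _ => 0) := by
    funext p
    rcases place_cases (n := n) (k := k) p with ⟨j, rfl⟩ | ⟨i', l, rfl⟩
    · simp [hM, mkv]
    · show M (insert i s) (pls i' l : Fin n ⊕ Fin (5 * k)) = _
      rw [mkv_pls]
      by_cases hii : i' = i
      · subst hii
        simp [hM, pls]
      · simp [hM, pls, hii, hB, Finset.mem_insert]
  rw [hMs, hMi]
  exact clear_steps a c op x hx i B hBnn (hreq i)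

end Build

end Enc

/-- For every conjunction `φ` of `k` atomic propositions `a_i·x ∼_i c_i` with rational
coefficients, there is a continuous Petri net `N_φ` over the places `Fin n ⊕ Fin (5k)`
and a vector `y ∈ {0,1}^{5k}` such that for every `x ∈ (ℝ≥0)^n`:
`φ(x)` holds iff `(x, y) →* (0, 0)` in `N_φ`. -/
theorem exists_petriNet_encoding_conjunction
    (n k : ℕ) (a : Fin k → Fin n → ℚ) (c : Fin k → ℚ) (op : Fin k → CmpOp) :
    ∃ (T : Type) (_ : Fintype T)
      (N : PetriNet (Fin n ⊕ Fin (5 * k)) T) (y : Fin (5 * k) → ℝ),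
      (∀ i, y i = 0 ∨ y i = 1) ∧
      ∀ x : Fin n → ℝ, 0 ≤ x →
        ((∀ i : Fin k, (op i).holds (∑ j, (a i j : ℝ) * x j) (c i : ℝ)) ↔
          Relation.ReflTransGen N.step (Sum.elim x y) 0) := by
  classical
  refine ⟨Fin n ⊕ Fin k × Fin 5, inferInstance, Enc.net a c op, Enc.yvec op, ?_, ?_⟩
  · intro q
    simp only [Enc.yvec]
    split_ifs <;> simp
  · intro x hx
    have hx' : ∀ j, 0 ≤ x j := fun j => hx j
    constructor
    · intro h
      have hreq : ∀ i, (Enc.md op i).req (∑ j, ((Enc.bco a c op i j : ℤ) : ℝ) * x j)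
          ((Enc.eco a c op i : ℤ) : ℝ) := fun i => (Enc.holds_iff_req a c op i x).mp (h i)
      exact ((Enc.phase1 a c op x hx').trans (Enc.phase2 a c op x hx')).trans
        (Enc.phase3 a c op x hx' hreq)
    · intro h i
      exact (Enc.holds_iff_req a c op i x).mpr (Enc.backward a c op i x h)
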